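/- arXiv:1802.04685 — 4 statements merged into one kernel-verified Lean document; each statement's English description precedes it below -/
import Mathlib

section
/- Let k be a field of characteristic zero and let A, B, w ∈ k[x,y] be polynomials in two variables. Suppose the Jacobian Jac(A,B) is a unit of k[x,y] (equivalently, a nonzero constant) and Jac(A,w) = 0. Then w lies in k[A], i.e., w belongs to the k-subalgebra of k[x,y] generated by A (equivalently, w = P(A) for some univariate polynomial P with coefficients in k). -/
/-!
Since `Jac(A,B)` is a unit, `∂ₓA` and `∂ᵧA` are coprime, so `Jac(A,w) = 0` forces `∇w = h ∇A`
for a polynomial `h`. Equality of mixed partials gives `Jac(A,h) = 0`, and `deg h < deg w`, so by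
induction on the degree `h = Q(A)`. If `P' = Q`, then `w - P(A)` has zero gradient, hence is a
constant in characteristic zero.
-/

open MvPolynomial

/-- The Jacobian of two polynomials `p, q ∈ R[x,y]`:
`Jac(p,q) = (∂p/∂x)(∂q/∂y) − (∂p/∂y)(∂q/∂x)`. -/
noncomputable def Jac {R : Type*} [CommRing R]
    (p q : MvPolynomial (Fin 2) R) : MvPolynomial (Fin 2) R :=
  pderiv 0 p * pderiv 1 q - pderiv 1 p * pderiv 0 q

theorem Polynomial.exists_derivative_eq {k : Type*} [Field k] [CharZero k] (q : Polynomial k) :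
    ∃ p, Polynomial.derivative p = q := by
  induction q using Polynomial.induction_on' with
  | add q r hq hr =>
    obtain ⟨p, rfl⟩ := hq
    obtain ⟨p', rfl⟩ := hr
    exact ⟨p + p', Polynomial.derivative_add⟩
  | monomial n a =>
    refine ⟨Polynomial.monomial (n + 1) (a / (n + 1)), ?_⟩
    rw [Polynomial.derivative_monomial, Nat.add_sub_cancel]
    push_cast
    rw [div_mul_cancel₀ _ (Nat.cast_add_one_ne_zero n)]

namespace MvPolynomial

variable {σ R : Type*}

theorem pderiv_pderiv_comm [CommSemiring R] (p : MvPolynomial σ R) (i j : σ) :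
    pderiv i (pderiv j p) = pderiv j (pderiv i p) := by
  classical
  obtain rfl | hij := eq_or_ne i j
  · rfl
  ext m
  simp only [coeff_pderiv, Finsupp.add_apply, Finsupp.single_eq_of_ne hij,
    Finsupp.single_eq_of_ne hij.symm, add_zero, add_right_comm m]
  ring

theorem totalDegree_pderiv_lt [CommSemiring R] {p : MvPolynomial σ R} {i : σ}
    (h : pderiv i p ≠ 0) : (pderiv i p).totalDegree < p.totalDegree := by
  obtain ⟨m, hm, hdeg⟩ := Finset.exists_mem_eq_sup _ (support_nonempty.mpr h)
    fun m : σ →₀ ℕ => m.sum fun _ e => e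
  have hm' : m + Finsupp.single i 1 ∈ p.support := by
    rw [mem_support_iff, coeff_pderiv] at hm
    exact mem_support_iff.mpr (left_ne_zero_of_mul hm)
  have := le_totalDegree hm'
  rw [Finsupp.sum_add_index' (fun _ => rfl) (fun _ _ _ => rfl), Finsupp.sum_single_index rfl]
    at this
  rw [totalDegree, hdeg]
  omega

theorem eq_C_of_forall_pderiv_eq_zero [CommRing R] [IsDomain R] [CharZero R]
    {p : MvPolynomial σ R} (h : ∀ i, pderiv i p = 0) : p = C (coeff 0 p) := by
  classical
  ext m
  rw [coeff_C]
  split_ifs with hm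
  · rw [hm]
  obtain ⟨i, hi⟩ : ∃ i, m i ≠ 0 := by
    by_contra! hc
    exact hm (Finsupp.ext hc).symm
  have hcoeff := coeff_pderiv (i := i) p (m - Finsupp.single i 1)
  rw [h i, coeff_zero,
    tsub_add_cancel_of_le (Finsupp.single_le_iff.mpr (Nat.one_le_iff_ne_zero.mpr hi))] at hcoeff
  exact (mul_eq_zero.mp hcoeff.symm).resolve_right (Nat.cast_add_one_ne_zero _)

theorem mem_adjoin_of_pderiv_eq_mul {k : Type*} [Field k] [CharZero k]
    {A h w : MvPolynomial σ k} (hh : h ∈ Algebra.adjoin k {A})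
    (hgrad : ∀ i, pderiv i w = h * pderiv i A) : w ∈ Algebra.adjoin k {A} := by
  rw [Algebra.adjoin_singleton_eq_range_aeval] at hh ⊢
  obtain ⟨q, rfl⟩ := hh
  obtain ⟨p, hp⟩ := Polynomial.exists_derivative_eq q
  have hconst : ∀ i, pderiv i (w - Polynomial.aeval A p) = 0 := fun i => by
    rw [map_sub, Derivation.map_aeval, hp, smul_eq_mul, hgrad i]
    exact sub_self _
  refine ⟨p + Polynomial.C (coeff 0 (w - Polynomial.aeval A p)), ?_⟩
  change Polynomial.aeval A _ = w
  rw [map_add, Polynomial.aeval_C, algebraMap_eq, ← eq_C_of_forall_pderiv_eq_zero hconst,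
    add_sub_cancel]

end MvPolynomial

theorem IsRelPrime.exists_eq_mul_of_mul_eq_mul {α : Type*} [CommMonoidWithZero α]
    [IsCancelMulZero α] [DecompositionMonoid α] {a b c d : α} (hab : IsRelPrime a b)
    (h : a * d = b * c) :
    ∃ t, c = t * a ∧ d = t * b := by
  obtain rfl | hb := eq_or_ne b 0
  · have ha := isRelPrime_zero_right.mp hab
    refine ⟨c * ↑ha.unit⁻¹, by rw [mul_assoc, ha.val_inv_mul, mul_one], ?_⟩
    rw [zero_mul] at h
    rw [mul_zero, ← ha.mul_right_eq_zero, h]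
  obtain ⟨t, rfl⟩ := hab.symm.dvd_of_dvd_mul_left ⟨c, h⟩
  refine ⟨t, mul_left_cancel₀ hb ?_, mul_comm _ _⟩
  rw [← h, mul_left_comm, mul_comm t]

section Jacobian

variable {R : Type*} [CommRing R]

theorem isRelPrime_pderiv_of_isUnit_jac {A B : MvPolynomial (Fin 2) R} (hAB : IsUnit (Jac A B)) :
    IsRelPrime (pderiv 0 A) (pderiv 1 A) := fun _ h0 h1 =>
  isUnit_of_dvd_unit (dvd_sub (h0.mul_right _) (h1.mul_right _)) hAB

-- Equality of mixed partials of `w`, with `∇w = h ∇A`, kills the terms of `∂₁(h ∂₀A) = ∂₀(h ∂₁A)`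
-- that do not involve derivatives of `h`.
theorem jac_eq_zero_of_pderiv_eq_mul {A h w : MvPolynomial (Fin 2) R}
    (hgrad : ∀ i, pderiv i w = h * pderiv i A) : Jac A h = 0 := by
  have hw := pderiv_pderiv_comm w 1 0
  have hA := pderiv_pderiv_comm A 1 0
  rw [hgrad, hgrad, pderiv_mul, pderiv_mul] at hw
  rw [Jac]
  linear_combination hw - h * hA

end Jacobian

section Field

variable {k : Type*} [Field k]

theorem exists_pderiv_eq_mul_of_jac_eq_zero {A w : MvPolynomial (Fin 2) k}
    (hA : IsRelPrime (pderiv 0 A) (pderiv 1 A)) (hw : Jac A w = 0) :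
    ∃ h, ∀ i, pderiv i w = h * pderiv i A := by
  obtain ⟨h, h0, h1⟩ := hA.exists_eq_mul_of_mul_eq_mul (sub_eq_zero.mp hw)
  exact ⟨h, Fin.forall_fin_two.mpr ⟨h0, h1⟩⟩

theorem mem_adjoin_of_jac_eq_zero [CharZero k] {A w : MvPolynomial (Fin 2) k}
    (hA : IsRelPrime (pderiv 0 A) (pderiv 1 A)) (hw : Jac A w = 0) :
    w ∈ Algebra.adjoin k {A} := by
  induction hn : w.totalDegree using Nat.strong_induction_on generalizing w with
  | _ n ih =>
  by_cases hconst : ∀ i, pderiv i w = 0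
  · rw [eq_C_of_forall_pderiv_eq_zero hconst]
    exact Subalgebra.algebraMap_mem _ _
  push Not at hconst
  obtain ⟨i, hi⟩ := hconst
  obtain ⟨h, hgrad⟩ := exists_pderiv_eq_mul_of_jac_eq_zero hA hw
  have hdeg : h.totalDegree < n := calc
    h.totalDegree ≤ (pderiv i w).totalDegree :=
      totalDegree_le_of_dvd_of_isDomain ⟨pderiv i A, hgrad i⟩ hi
    _ < n := hn ▸ totalDegree_pderiv_lt hi
  exact mem_adjoin_of_pderiv_eq_mul (ih _ hdeg (jac_eq_zero_of_pderiv_eq_mul hgrad) rfl) hgrad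

end Field

/-- **CMW's theorem over a field `k` of characteristic zero.**
If `Jac(A,B)` is a unit of `k[x,y]` and `Jac(A,w) = 0`, then `w ∈ k[A]`. -/
theorem cmw_over_charZero_field {k : Type*} [Field k] [CharZero k]
    (A B w : MvPolynomial (Fin 2) k)
    (hAB : IsUnit (Jac A B)) (hAw : Jac A w = 0) :
    w ∈ Algebra.adjoin k {A} :=
  mem_adjoin_of_jac_eq_zero (isRelPrime_pderiv_of_isUnit_jac hAB) hAw
end

section
/- Let D be an integral domain of characteristic zero and let A, B, w ∈ D[x,y]. Suppose Jac(A,B) is a unit of D[x,y], Jac(A,w) = 0, and additionally the D-algebra endomorphism of D[x,y] sending x ↦ A and y ↦ B is an automorphism of D[x,y]. Then w lies in D[A], the D-subalgebra of D[x,y] generated by A. -/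
/-!
Write `w = φ g`, where `φ` is the automorphism `x ↦ A, y ↦ B`. By the chain rule
`Jac (φ p) (φ q) = φ (Jac p q) * Jac A B`, and `A = φ x`, so
`0 = Jac A w = φ (∂g/∂y) * Jac A B`. As `Jac A B` is a unit and `φ` is injective,
`∂g/∂y = 0`; in characteristic zero this means `g ∈ D[x]`, hence `w = φ g ∈ D[A]`.
-/

open MvPolynomial

namespace MvPolynomial

variable {R σ τ : Type*} [CommRing R]

theorem pderiv_aeval [Fintype σ] (f : σ → MvPolynomial τ R) (i : τ) (g : MvPolynomial σ R) :
    pderiv i (aeval f g) = ∑ j, aeval f (pderiv j g) * pderiv i (f j) := by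
  classical
  induction g using MvPolynomial.induction_on with
  | C a => simp
  | add p q hp hq => simp only [map_add, hp, hq, add_mul, Finset.sum_add_distrib]
  | mul_X p k hp =>
    simp only [map_mul, aeval_X, Derivation.leibniz, pderiv_X, smul_eq_mul, hp, map_add, add_mul,
      Finset.sum_add_distrib, Finset.mul_sum, Pi.single_apply, mul_ite, mul_one, mul_zero,
      apply_ite (aeval f), map_zero, ite_mul, zero_mul, Finset.sum_ite_eq, Finset.mem_univ,
      if_true, mul_assoc]

theorem pderiv_eq_zero_iff [IsAddTorsionFree R] {i : σ} {f : MvPolynomial σ R} :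
    pderiv i f = 0 ↔ i ∉ f.vars := by
  refine ⟨fun h hi => ?_, pderiv_eq_zero_of_notMem_vars⟩
  obtain ⟨m, hm, hmi⟩ := (mem_vars_iff_mem_support i).1 hi
  have hle : Finsupp.single i 1 ≤ m :=
    Finsupp.single_le_iff.2 (Nat.one_le_iff_ne_zero.2 (Finsupp.mem_support_iff.1 hmi))
  have hcoeff := congr_arg (coeff (m - Finsupp.single i 1)) h
  rw [coeff_pderiv, tsub_add_cancel_of_le hle, coeff_zero, mul_comm, ← Nat.cast_add_one,
    ← nsmul_eq_mul, nsmul_eq_zero_iff] at hcoeff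
  exact hcoeff.elim (mem_support_iff.1 hm) (Nat.succ_ne_zero _)

theorem mem_supported_compl_of_pderiv_eq_zero [IsAddTorsionFree R] {i : σ} {f : MvPolynomial σ R}
    (h : pderiv i f = 0) : f ∈ supported R {i}ᶜ :=
  mem_supported.2 fun _ hj hji => pderiv_eq_zero_iff.1 h (hji ▸ hj)

end MvPolynomial

theorem Jac_aeval {R : Type*} [CommRing R] (A B p q : MvPolynomial (Fin 2) R) :
    Jac (aeval ![A, B] p) (aeval ![A, B] q) = aeval ![A, B] (Jac p q) * Jac A B := by
  simp only [Jac, pderiv_aeval, Fin.sum_univ_two, map_sub, map_mul, Matrix.cons_val_zero,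
    Matrix.cons_val_one]
  ring

theorem Jac_X_zero_left {R : Type*} [CommRing R] (q : MvPolynomial (Fin 2) R) :
    Jac (X 0) q = pderiv 1 q := by
  simp [Jac]

/-- **Special case: automorphism pair.** Over an integral domain `D` of characteristic
zero: if `Jac(A,B)` is a unit of `D[x,y]`, `Jac(A,w) = 0`, and the `D`-algebra
endomorphism `x ↦ A, y ↦ B` of `D[x,y]` is an automorphism, then `w ∈ D[A]`. -/
theorem cmw_automorphism_pair {D : Type*} [CommRing D] [IsDomain D] [CharZero D]
    (A B w : MvPolynomial (Fin 2) D)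
    (hAB : IsUnit (Jac A B)) (hAw : Jac A w = 0)
    (hauto : Function.Bijective
      ⇑(MvPolynomial.aeval (R := D) ![A, B] :
        MvPolynomial (Fin 2) D →ₐ[D] MvPolynomial (Fin 2) D)) :
    w ∈ Algebra.adjoin D {A} := by
  obtain ⟨g, rfl⟩ := hauto.surjective w
  have hg : pderiv 1 g = 0 := by
    have h : aeval ![A, B] (pderiv 1 g) * Jac A B = 0 := by
      rwa [← Jac_X_zero_left, ← Jac_aeval, aeval_X, Matrix.cons_val_zero]
    exact hauto.injective <| by rw [(mul_eq_zero.1 h).resolve_right hAB.ne_zero, map_zero]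
  have hg₀ : g ∈ Algebra.adjoin D {X 0} := by
    have hcompl : ({1}ᶜ : Set (Fin 2)) = {0} := by ext j; fin_cases j <;> simp
    simpa [supported_eq_adjoin_X, hcompl] using mem_supported_compl_of_pderiv_eq_zero hg
  have hw : aeval ![A, B] g ∈ (Algebra.adjoin D {X 0}).map (aeval ![A, B]) := ⟨g, hg₀, rfl⟩
  rwa [AlgHom.map_adjoin_singleton, aeval_X, Matrix.cons_val_zero] at hw
end

section
/- Let k be a field of characteristic zero, let a, b be two algebraically independent elements (i.e., work in the polynomial ring k[a,b]), and let D be the k-subalgebra of k[a,b] generated by a², ab, b², a³, b³. Let A = (ax+by)² and w = (ax+by)³, both of which lie in D[x,y]. Then Jac(A,w) = 0, but w does not lie in D[A], the D-subalgebra of D[x,y] generated by A. -/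
open MvPolynomial

/-- The subalgebra `D = k[a², ab, b², a³, b³]` of `k[a,b]`,
where `a = X 0` and `b = X 1` are the two variables of `k[a,b]`. -/
noncomputable def D' (k : Type*) [Field k] : Subalgebra k (MvPolynomial (Fin 2) k) :=
  Algebra.adjoin k
    {(X 0 : MvPolynomial (Fin 2) k) ^ 2, X 0 * X 1, X 1 ^ 2, X 0 ^ 3, X 1 ^ 3}

/-- The element `ax + by` of `(k[a,b])[x,y]`, where `a = X 0, b = X 1` in the inner
ring `k[a,b]`, and `x = X 0, y = X 1` in the outer ring. -/
noncomputable def axby (k : Type*) [Field k] :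
    MvPolynomial (Fin 2) (MvPolynomial (Fin 2) k) :=
  C (X 0) * X 0 + C (X 1) * X 1

/-- **Second non-counterexample (YCor's example).** With `a, b` algebraically
independent over `k` (i.e., the variables of `k[a,b]`), `D = k[a², ab, b², a³, b³]`,
`A = (ax+by)²` and `w = (ax+by)³`, we have `Jac(A,w) = 0`, but `w` does not lie in
`D[A]`, the `D`-subalgebra generated by `A`. -/
theorem ycor_example {k : Type*} [Field k] [CharZero k] :
    Jac (axby k ^ 2) (axby k ^ 3) = 0 ∧
      axby k ^ 3 ∉ Algebra.adjoin ↥(D' k) {axby k ^ 2} := by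
  have hf : axby k ≠ 0 := by
    intro h0
    have := congrArg (eval (fun i : Fin 2 => if i = 0 then 1 else 0)) h0
    simp [axby] at this
  constructor
  · have e2 : axby k ^ 2 = axby k * axby k := by ring
    have e3 : axby k ^ 3 = axby k * axby k * axby k := by ring
    rw [Jac, e2, e3]
    simp only [pderiv_mul]
    ring
  · intro hw
    let σ : MvPolynomial (Fin 2) (MvPolynomial (Fin 2) k)
        →ₐ[MvPolynomial (Fin 2) k] MvPolynomial (Fin 2) (MvPolynomial (Fin 2) k) :=
      aeval (fun i : Fin 2 => -X i)
    have hσf : σ (axby k) = -axby k := by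
      show (aeval (fun i : Fin 2 => -X i)) (axby k) = -axby k
      simp only [axby, map_add, map_mul, aeval_X, aeval_C, MvPolynomial.algebraMap_eq]
      ring
    have hfix : σ (axby k ^ 3) = axby k ^ 3 := by
      refine Algebra.adjoin_induction ?_ ?_ ?_ ?_ hw
      · intro x hx
        rcases hx with rfl
        rw [map_pow, hσf]; ring
      · intro r
        rw [IsScalarTower.algebraMap_apply (↥(D' k)) (MvPolynomial (Fin 2) k)
          (MvPolynomial (Fin 2) (MvPolynomial (Fin 2) k)) r, AlgHom.commutes]
      · intro x y _ _ hx hy; rw [map_add, hx, hy]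
      · intro x y _ _ hx hy; rw [map_mul, hx, hy]
    rw [map_pow, hσf] at hfix
    have h3 : axby k ^ 3 = 0 := by
      have h2 : (2 : MvPolynomial (Fin 2) (MvPolynomial (Fin 2) k)) * axby k ^ 3 = 0 := by
        linear_combination -hfix
      rcases mul_eq_zero.mp h2 with h | h
      · exact absurd h (by norm_num)
      · exact h
    exact hf (pow_eq_zero_iff (by norm_num) |>.mp h3)
end

section
/- Let k be a field of characteristic zero, let a, b be two algebraically independent elements (i.e., work in the polynomial ring k[a,b]), and let D be the k-subalgebra of k[a,b] generated by a², ab, b², a³, b³. Then A = (ax+by)² ∈ D[x,y] has no Jacobian mate in D[x,y]: there is no B ∈ D[x,y] such that Jac(A,B) is a unit of D[x,y]. -/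
open MvPolynomial

/-- The polynomial `A = (ax+by)² = a²x² + 2ab·xy + b²y²`, viewed as an element of
`D[x,y]` (its coefficients `a²`, `ab`, `b²` lie in `D = k[a², ab, b², a³, b³]`). -/
noncomputable def A' (k : Type*) [Field k] : MvPolynomial (Fin 2) ↥(D' k) :=
  C ⟨(X 0 : MvPolynomial (Fin 2) k) ^ 2, Algebra.subset_adjoin (by simp)⟩ * X 0 ^ 2
  + 2 * C ⟨(X 0 : MvPolynomial (Fin 2) k) * X 1, Algebra.subset_adjoin (by simp)⟩
      * X 0 * X 1
  + C ⟨(X 1 : MvPolynomial (Fin 2) k) ^ 2, Algebra.subset_adjoin (by simp)⟩ * X 1 ^ 2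

set_option synthInstance.maxHeartbeats 1000000 in
set_option maxHeartbeats 2000000 in
/-- **`A = (ax+by)²` has no Jacobian mate in `D[x,y]`**, where
`D = k[a², ab, b², a³, b³] ⊆ k[a,b]`: there is no `B ∈ D[x,y]` such that `Jac(A,B)`
is a unit of `D[x,y]`. -/
theorem ycor_no_jacobian_mate {k : Type*} [Field k] [CharZero k] :
    ¬ ∃ B : MvPolynomial (Fin 2) ↥(D' k), IsUnit (Jac (A' k) B) := by
  rintro ⟨B, hu⟩
  -- map to k[a,b][x,y]
  set φ : MvPolynomial (Fin 2) ↥(D' k) →+* MvPolynomial (Fin 2) (MvPolynomial (Fin 2) k) :=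
    MvPolynomial.map (D' k).val.toRingHom with hφ
  have hu' : IsUnit (φ (Jac (A' k) B)) := hu.map φ
  set a : MvPolynomial (Fin 2) (MvPolynomial (Fin 2) k) := C (X 0) with ha
  set b : MvPolynomial (Fin 2) (MvPolynomial (Fin 2) k) := C (X 1) with hb
  set L : MvPolynomial (Fin 2) (MvPolynomial (Fin 2) k) := a * X 0 + b * X 1 with hL
  have hA : φ (A' k) = L ^ 2 := by
    simp only [hφ, A', map_add, map_mul, map_pow, map_ofNat, MvPolynomial.map_C,
      MvPolynomial.map_X, hL, ha, hb, AlgHom.toRingHom_eq_coe, RingHom.coe_coe,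
      Subalgebra.coe_val]
    ring
  have hJ : φ (Jac (A' k) B) =
      L * (2 * a * pderiv 1 (φ B) - 2 * b * pderiv 0 (φ B)) := by
    simp only [Jac, map_sub, map_mul]
    rw [hφ, ← pderiv_map, ← pderiv_map, ← pderiv_map, ← pderiv_map, ← hφ, hA]
    have h0 : pderiv 0 (L ^ 2) = 2 * L * a := by
      simp [hL, ha, hb, pderiv_X, Pi.single_apply]; ring
    have h1 : pderiv 1 (L ^ 2) = 2 * L * b := by
      simp [hL, ha, hb, pderiv_X, Pi.single_apply]; ring
    rw [h0, h1]; ring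
  rw [hJ] at hu'
  have hLu : IsUnit L := isUnit_of_mul_isUnit_left hu'
  have := hLu.map (constantCoeff (R := MvPolynomial (Fin 2) k) (σ := Fin 2))
  simp [hL, ha, hb] at this
end
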